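/- Let q be a prime power, n ≥ 1, and H a function on F_{q^n} such that x ↦ Tr(H(x)) is not constant. Then |P_H| ≤ q^n − q^{n−1}, where P_H = {γ ∈ F_{q^n} : x + γ·Tr(H(x)) permutes F_{q^n}}. -/

import Mathlib

/-! The values of `Tr ∘ H` are roots of `X ^ q - X`, so there are at most `q` of them and some
fibre `{x | Tr (H x) = b}` has at least `q ^ (n - 1)` points. Fix `v` with `Tr (H v) ≠ b`. For `u`
in the fibre, `γ = (u - v) / (Tr (H v) - b)` makes `x ↦ x + γ * Tr (H x)` send `u` and `v` to the
same point; distinct `u` give distinct `γ`, so at least `q ^ (n - 1)` elements lie outside `P_H`. -/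

/-- The trace-like map `x ↦ ∑_{i<n} x^(q^i)` from `F_{q^n}` to `F_q`. -/
def fieldTrace (q n : ℕ) {F : Type*} [Field F] (x : F) : F :=
  ∑ i ∈ Finset.range n, x ^ q ^ i

open Finset Function Polynomial

theorem card_filter_pow_eq_self_le {K : Type*} [Field K] [Fintype K] [DecidableEq K] {q : ℕ}
    (hq : 1 < q) : #{x : K | x ^ q = x} ≤ q := by
  refine (card_le_degree_of_subset_roots fun x hx ↦ ?_).trans_eq
    (FiniteField.X_pow_card_sub_X_natDegree_eq K hq)
  rw [mem_roots (FiniteField.X_pow_card_sub_X_ne_zero K hq)]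
  simpa [sub_eq_zero] using (mem_filter.mp hx).2

theorem exists_le_card_fiber_of_pow_eq_self {α K : Type*} [Fintype α] [Field K] [Fintype K]
    [DecidableEq K] {q k : ℕ} (hq : 1 < q) (t : α → K) (ht : ∀ x, t x ^ q = t x)
    (hk : q * k ≤ Fintype.card α) : ∃ b, k ≤ #{x | t x = b} := by
  have hzero : (0 : K) ∈ ({y | y ^ q = y} : Finset K) := by simp [zero_pow (by omega : q ≠ 0)]
  obtain ⟨b, -, hb⟩ := exists_le_card_fiber_of_mul_le_card_of_maps_to
    (s := univ) (t := {y : K | y ^ q = y}) (fun x _ ↦ by simpa using ht x) ⟨0, hzero⟩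
    ((Nat.mul_le_mul_right k (card_filter_pow_eq_self_le hq)).trans hk)
  exact ⟨b, hb⟩

theorem fieldTrace_pow_eq_self {F : Type*} [Field F] {p m n : ℕ} [ExpChar F p] {y : F}
    (hy : y ^ (p ^ m) ^ n = y) : fieldTrace (p ^ m) n y ^ p ^ m = fieldTrace (p ^ m) n y := by
  have hshift : fieldTrace (p ^ m) n y ^ p ^ m = ∑ i ∈ range n, y ^ (p ^ m) ^ (i + 1) := by
    simp only [fieldTrace, sum_pow_char_pow, ← pow_mul, pow_succ]
  have htelescope := (sum_range_succ' (fun i ↦ y ^ (p ^ m) ^ i) n).symm.trans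
    (sum_range_succ (fun i ↦ y ^ (p ^ m) ^ i) n)
  rw [hy, pow_zero, pow_one] at htelescope
  rw [hshift, fieldTrace]
  linear_combination htelescope

theorem not_injective_add_mul_of_ne {K : Type*} [Field K] (t : K → K) {u v : K}
    (h : t u ≠ t v) : ¬ Injective fun x ↦ x + (u - v) / (t v - t u) * t x := by
  intro hinj
  refine h (congrArg t (hinj ?_))
  have hden : t v - t u ≠ 0 := sub_ne_zero.mpr h.symm
  linear_combination -(div_mul_cancel₀ (u - v) hden)

theorem card_fiber_add_card_injective_le {K : Type*} [Field K] [Finite K] (t : K → K)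
    {b v : K} (hv : t v ≠ b) :
    Nat.card {x // t x = b} + Nat.card {γ // Injective fun x ↦ x + γ * t x} ≤ Nat.card K := by
  set slope : {x // t x = b} → K := fun u ↦ (u - v) / (t v - b)
  have hslope : Injective slope := fun u w h ↦ Subtype.ext <| by
    simpa [slope, div_left_inj' (sub_ne_zero.mpr hv)] using h
  have hdisjoint : ∀ u (γ : {γ // Injective fun x ↦ x + γ * t x}), slope u ≠ γ := by
    rintro ⟨u, hu⟩ ⟨γ, hγ⟩ rfl
    have := not_injective_add_mul_of_ne t (u := u) (v := v) (hu.symm ▸ hv.symm)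
    rw [hu] at this
    exact this hγ
  rw [← Nat.card_sum]
  exact Nat.card_le_card_of_injective _ (hslope.sumElim Subtype.val_injective hdisjoint)

theorem stmt_8 (p m n : ℕ) (hp : p.Prime) (hm : 0 < m) (hn : 0 < n)
    (F : Type*) [Field F] [Fintype F] (hF : Fintype.card F = (p ^ m) ^ n)
    (H : F → F)
    (hnc : ¬ ∃ c : F, ∀ x : F, fieldTrace (p ^ m) n (H x) = c) :
    Nat.card {γ : F //
        Function.Bijective (fun x : F => x + γ * fieldTrace (p ^ m) n (H x))} ≤
      (p ^ m) ^ n - (p ^ m) ^ (n - 1) := by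
  classical
  have hq : 1 < p ^ m := Nat.one_lt_pow hm.ne' hp.one_lt
  have : Fact p.Prime := ⟨hp⟩
  have : CharP F p := charP_of_card_eq_prime_pow (hF.trans (pow_mul p m n).symm)
  have htrace : ∀ x, fieldTrace (p ^ m) n (H x) ^ p ^ m = fieldTrace (p ^ m) n (H x) :=
    fun x ↦ fieldTrace_pow_eq_self (hF ▸ FiniteField.pow_card (H x))
  obtain ⟨b, hb⟩ := exists_le_card_fiber_of_pow_eq_self (k := (p ^ m) ^ (n - 1)) hq _ htrace <| by
    rw [hF, ← pow_succ', Nat.sub_add_cancel hn]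
  obtain ⟨v, hv⟩ := not_forall.mp (not_exists.mp hnc b)
  have hcount := card_fiber_add_card_injective_le (fun x ↦ fieldTrace (p ^ m) n (H x)) hv
  simp only [Finite.injective_iff_bijective, Nat.card_eq_fintype_card, Fintype.card_subtype,
    hF] at hcount ⊢
  omega
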